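/- Let π_{a_10} be the arrangement of Π immediately after the swap in which a_10 enters the 13-center. If for some 1 ≤ i ≤ 5 and some 1 ≤ l ≤ 3 the element a_i is at position 10 + l or at position 21 − l in π_{a_10}, then hal(a_i) ≤ l. -/

import Mathlib

/-- An `n`-half-period: a sequence `π_0, …, π_{n(n-1)/2}` of arrangements of `n`
labeled elements in the positions `1, …, n` (recorded by `pos t x` = the position of
element `x` at time `t`), in which consecutive arrangements differ by a transposition
of the elements in two adjacent positions, and the last arrangement is the reverse of
the first. -/
structure HalfPeriod (n : ℕ) where
  pos : ℕ → Fin n → ℕ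
  pos_mem : ∀ t, t ≤ n * (n - 1) / 2 → ∀ x, 1 ≤ pos t x ∧ pos t x ≤ n
  pos_inj : ∀ t, t ≤ n * (n - 1) / 2 → Function.Injective (pos t)
  step : ∀ t, t < n * (n - 1) / 2 → ∃ x y : Fin n,
    pos t y = pos t x + 1 ∧ pos (t + 1) x = pos t x + 1 ∧ pos (t + 1) y = pos t x ∧
    ∀ z, z ≠ x → z ≠ y → pos (t + 1) z = pos t z
  reverse : ∀ x, pos (n * (n - 1) / 2) x = n + 1 - pos 0 x

namespace HalfPeriod

variable {n : ℕ}

/-- The number of transposition steps of an `n`-half-period. -/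
def steps (n : ℕ) : ℕ := n * (n - 1) / 2

/-- Element `x` moves (changes position) at step `t`. -/
def Moved (hp : HalfPeriod n) (t : ℕ) (x : Fin n) : Prop :=
  hp.pos (t + 1) x ≠ hp.pos t x

/-- Step `t` is the transposition of the (distinct) elements `x` and `y`. -/
def SwapsAt (hp : HalfPeriod n) (t : ℕ) (x y : Fin n) : Prop :=
  x ≠ y ∧ hp.Moved t x ∧ hp.Moved t y

/-- Step `t` is an `i`-transposition: it swaps the elements at positions `i` and `i+1`. -/
def GateAt (hp : HalfPeriod n) (t i : ℕ) : Prop :=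
  ∃ x y : Fin n, hp.pos t x = i ∧ hp.pos t y = i + 1 ∧
    hp.pos (t + 1) x = i + 1 ∧ hp.pos (t + 1) y = i

/-- Step `t` is an `i`-critical transposition: an `i`- or an `(n-i)`-transposition. -/
def Critical (hp : HalfPeriod n) (t i : ℕ) : Prop :=
  hp.GateAt t i ∨ hp.GateAt t (n - i)

/-- Step `t` is a `(≤ k)`-critical transposition. -/
def LeCritical (hp : HalfPeriod n) (t k : ℕ) : Prop :=
  ∃ i, 1 ≤ i ∧ i ≤ k ∧ hp.Critical t i

/-- `N_{≤ k}`: the number of `(≤ k)`-critical transpositions of the half-period. -/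
noncomputable def NLe (hp : HalfPeriod n) (k : ℕ) : ℕ :=
  {t : ℕ | t < steps n ∧ hp.LeCritical t k}.ncard

end HalfPeriod
/-- `hp` is a 3-decomposable `30`-half-period, witnessed by the labeling
`A = {a 0, …, a 9}`, `B = {b 0, …, b 9}`, `C = {c 0, …, c 9}` (the element with
1-indexed subscript `j` is `a (j-1)`, etc.): the initial arrangement is
`(a_10, a_9, …, a_1, b_1, …, b_10, c_1, …, c_10)`, every transposition between `A`
and `B` occurs before every transposition between `C` and `A ∪ B`, and every
transposition between `A` and `C` occurs before every transposition between `B`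
and `C`. -/
def IsThreeDecompLabeling30 (hp : HalfPeriod 30) (a b c : Fin 10 → Fin 30) : Prop :=
  Function.Injective (Sum.elim a (Sum.elim b c)) ∧
  (∀ i : Fin 10, hp.pos 0 (a i) = 10 - (i : ℕ)) ∧
  (∀ i : Fin 10, hp.pos 0 (b i) = 11 + (i : ℕ)) ∧
  (∀ i : Fin 10, hp.pos 0 (c i) = 21 + (i : ℕ)) ∧
  (∀ s t, s < HalfPeriod.steps 30 → t < HalfPeriod.steps 30 →
    (∃ i j, hp.SwapsAt s (a i) (b j)) →
    (∃ i x, ((∃ j, x = a j) ∨ (∃ j, x = b j)) ∧ hp.SwapsAt t (c i) x) → s < t) ∧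
  (∀ s t, s < HalfPeriod.steps 30 → t < HalfPeriod.steps 30 →
    (∃ i j, hp.SwapsAt s (a i) (c j)) →
    (∃ i j, hp.SwapsAt t (b i) (c j)) → s < t)

/-- `x` and `y` belong to the same one of the three classes `A`, `B`, `C`. -/
def SameClass (a b c : Fin 10 → Fin 30) (x y : Fin 30) : Prop :=
  (∃ i j, x = a i ∧ y = a j) ∨ (∃ i j, x = b i ∧ y = b j) ∨ (∃ i j, x = c i ∧ y = c j)
/-- Position `p` lies in the `k`-center (positions `k+1, …, 30-k`) of a `30`-half-period. -/
def InCenter (k p : ℕ) : Prop := k + 1 ≤ p ∧ p ≤ 30 - k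

/-- Step `t` is the (first) swap in which element `x` enters the `k`-center. -/
def EntersCenterAt (hp : HalfPeriod 30) (k : ℕ) (x : Fin 30) (t : ℕ) : Prop :=
  t < HalfPeriod.steps 30 ∧ InCenter k (hp.pos (t + 1) x) ∧ ¬ InCenter k (hp.pos t x) ∧
    ∀ s < t, ¬ (InCenter k (hp.pos (s + 1) x) ∧ ¬ InCenter k (hp.pos s x))

/-- Step `t` is the (last) swap in which element `x` leaves the `k`-center. -/
def LeavesCenterAt (hp : HalfPeriod 30) (k : ℕ) (x : Fin 30) (t : ℕ) : Prop :=
  t < HalfPeriod.steps 30 ∧ InCenter k (hp.pos t x) ∧ ¬ InCenter k (hp.pos (t + 1) x) ∧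
    ∀ s, t < s → s < HalfPeriod.steps 30 →
      ¬ (InCenter k (hp.pos s x) ∧ ¬ InCenter k (hp.pos (s + 1) x))
/-- `hal(x_{j+1})`: the number of indices `i < j` such that the transposition between
`x j` and `x i` occurs in the 15th gate (swaps positions `15` and `16`). -/
noncomputable def halOf (hp : HalfPeriod 30) (x : Fin 10 → Fin 30) (j : Fin 10) : ℕ :=
  {i : Fin 10 | i < j ∧ ∃ t, t < HalfPeriod.steps 30 ∧ hp.GateAt t 15 ∧
    hp.SwapsAt t (x j) (x i)}.ncard

/-- `N_15^{xx}`: the number of 15-transpositions between two elements of the class `x`. -/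
noncomputable def N15Mono (hp : HalfPeriod 30) (x : Fin 10 → Fin 30) : ℕ :=
  {t : ℕ | t < HalfPeriod.steps 30 ∧ hp.GateAt t 15 ∧ ∃ i j, hp.SwapsAt t (x i) (x j)}.ncard

/-! The assumed values of `N_{≤ k}` leave exactly `3g` transpositions at the gates `g` and
`30 - g` (`1 ≤ g ≤ 10`), and downward crossings already use all of them: `g` elements of `B`
cross gate `g` (before the first `B`-`C` swap the `b`'s fill positions `1, …, 10`), and `g`
elements of `C` cross both gates. Hence no element of `A` ever moves down through a gate `≤ 10` or
`≥ 20`. So `a_m` passes `a_10` at a gate in `11, …, 19`, and at time `t + 1`, when `a_10` is at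
position `14`, every other `a` left of `a_10` is at a position `≥ 11` and every one right of it at
a position `≤ 20`.

Each `15`-transposition of `a_i` with some `a_k`, `k < i`, moves `a_i` up from `15` to `16`. If
`a_i` is at `10 + l` (resp. `21 - l`), those after (resp. before) `t` alternate with downward passes
of `a_i` through gate `15`, whose partners are distinct `a`'s of index `> i` lying, at time `t + 1`,
on the same side of `a_i` as the `a_k` passed before (resp. after) `t`. All of these fit into the
`l - 1` positions between `a_i` and `10` (resp. `21`), whence `hal(a_i) ≤ l`. -/

theorem card_filter_upCrossing_le (f : ℕ → ℕ) (g : ℕ) {s₀ s₁ : ℕ}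
    (hf : ∀ u, s₀ ≤ u → u < s₁ → f (u + 1) ≤ f u + 1 ∧ f u ≤ f (u + 1) + 1) :
    ((Finset.Ico s₀ s₁).filter (fun u => f u = g ∧ f (u + 1) = g + 1)).card ≤
      ((Finset.Ico s₀ s₁).filter (fun u => f u = g + 1 ∧ f (u + 1) = g)).card + 1 := by
  rcases lt_or_ge s₁ s₀ with h | h
  · simp [Finset.Ico_eq_empty_of_le h.le]
  -- each up-crossing of `g` switches `g < f` on, each down-crossing switches it off
  suffices key : ∀ s, s₀ ≤ s → s ≤ s₁ →
      ((Finset.Ico s₀ s).filter (fun u => f u = g ∧ f (u + 1) = g + 1)).card +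
          (if g < f s₀ then 1 else 0) =
        ((Finset.Ico s₀ s).filter (fun u => f u = g + 1 ∧ f (u + 1) = g)).card +
          (if g < f s then 1 else 0) by
    have := key s₁ h le_rfl
    split_ifs at this <;> omega
  intro s hs
  induction s, hs using Nat.le_induction with
  | base => simp
  | succ s hs ih =>
    intro hs₁
    have hstep := hf s hs hs₁
    simp only [Finset.card_filter, Finset.sum_Ico_succ_top hs] at ih ⊢
    have := ih (by omega)
    split_ifs at this ⊢ <;> omega

theorem Set.ncard_le_ncard_image_union_add_one {α β : Type*} [Finite α] [Finite β] {f : α → β}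
    (hf : f.Injective) {F L : Set α} {Z Y : Set β} (hF : F ⊆ L ∪ f ⁻¹' Z)
    (hZ : Z.ncard ≤ Y.ncard + 1) (hLY : Disjoint (f '' L) Y) :
    F.ncard ≤ (f '' L ∪ Y).ncard + 1 := by
  have hpre : (f ⁻¹' Z).ncard ≤ Z.ncard := Set.ncard_le_ncard_of_injOn f (fun _ h => h) hf.injOn
  calc F.ncard ≤ (L ∪ f ⁻¹' Z).ncard := Set.ncard_le_ncard hF
    _ ≤ L.ncard + (f ⁻¹' Z).ncard := Set.ncard_union_le _ _
    _ ≤ (f '' L).ncard + Y.ncard + 1 := by rw [Set.ncard_image_of_injective _ hf]; omega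
    _ = (f '' L ∪ Y).ncard + 1 := by rw [Set.ncard_union_eq hLY]

namespace HalfPeriod

variable {n : ℕ} (hp : HalfPeriod n)

theorem one_le_pos {s : ℕ} (hs : s ≤ steps n) (x : Fin n) : 1 ≤ hp.pos s x :=
  (hp.pos_mem s hs x).1

theorem pos_le {s : ℕ} (hs : s ≤ steps n) (x : Fin n) : hp.pos s x ≤ n :=
  (hp.pos_mem s hs x).2

theorem pos_injective {s : ℕ} (hs : s ≤ steps n) : Function.Injective (hp.pos s) :=
  hp.pos_inj s hs

theorem pos_succ_cases {s : ℕ} (hs : s < steps n) (z : Fin n) :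
    hp.pos (s + 1) z = hp.pos s z ∨ hp.pos (s + 1) z = hp.pos s z + 1 ∨
      hp.pos (s + 1) z + 1 = hp.pos s z := by
  obtain ⟨x, y, hxy, hx, hy, hrest⟩ := hp.step s hs
  by_cases hzx : z = x
  · rw [hzx]; omega
  by_cases hzy : z = y
  · rw [hzy]; omega
  exact Or.inl (hrest z hzx hzy)

theorem swapsAt_symm {s : ℕ} {x y : Fin n} (h : hp.SwapsAt s x y) : hp.SwapsAt s y x :=
  ⟨h.1.symm, h.2.2, h.2.1⟩

theorem exists_swapsAt_of_lt {s : ℕ} (hs : s < steps n) :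
    ∃ x y, hp.SwapsAt s x y ∧ hp.pos s y = hp.pos s x + 1 ∧ hp.pos (s + 1) x = hp.pos s y ∧
      hp.pos (s + 1) y = hp.pos s x := by
  obtain ⟨x, y, hxy, hx, hy, -⟩ := hp.step s hs
  exact ⟨x, y, ⟨fun he => by subst he; omega, by simp [Moved]; omega, by simp [Moved]; omega⟩,
    hxy, by omega, by omega⟩

theorem eq_or_eq_of_swapsAt_of_moved {s : ℕ} (hs : s < steps n) {x y z : Fin n}
    (hxy : hp.SwapsAt s x y) (hz : hp.Moved s z) : z = x ∨ z = y := by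
  obtain ⟨x₀, y₀, -, hx₀, hy₀, hrest⟩ := hp.step s hs
  have hmoved : ∀ w, hp.Moved s w → w = x₀ ∨ w = y₀ := fun w hw => by
    by_contra h
    exact hw (hrest w (fun e => h (.inl e)) (fun e => h (.inr e)))
  obtain ⟨hne, hx, hy⟩ := hxy
  rcases hmoved x hx with rfl | rfl <;> rcases hmoved y hy with rfl | rfl <;>
    rcases hmoved z hz with rfl | rfl <;> simp_all

theorem swapsAt_pos {s : ℕ} (hs : s < steps n) {x y : Fin n} (hxy : hp.SwapsAt s x y)
    (h : hp.pos s x < hp.pos s y) :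
    hp.pos s y = hp.pos s x + 1 ∧ hp.pos (s + 1) x = hp.pos s y ∧
      hp.pos (s + 1) y = hp.pos s x := by
  obtain ⟨x₀, y₀, hsw, h₀⟩ := hp.exists_swapsAt_of_lt hs
  rcases hp.eq_or_eq_of_swapsAt_of_moved hs hsw hxy.2.1 with rfl | rfl <;>
    rcases hp.eq_or_eq_of_swapsAt_of_moved hs hsw hxy.2.2 with rfl | rfl
  all_goals first | exact absurd rfl hxy.1 | omega

theorem exists_swapsAt_of_pos_succ_add_one_eq {s : ℕ} (hs : s < steps n) {z : Fin n}
    (hz : hp.pos (s + 1) z + 1 = hp.pos s z) :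
    ∃ w, hp.SwapsAt s w z ∧ hp.pos s w + 1 = hp.pos s z := by
  obtain ⟨x, y, hsw, h₀⟩ := hp.exists_swapsAt_of_lt hs
  rcases hp.eq_or_eq_of_swapsAt_of_moved hs hsw (z := z) (by simp [Moved]; omega) with rfl | rfl
  · omega
  · exact ⟨x, hsw, by omega⟩

theorem eq_of_pos_succ_lt {s : ℕ} (hs : s < steps n) {z z' : Fin n}
    (hz : hp.pos (s + 1) z < hp.pos s z) (hz' : hp.pos (s + 1) z' < hp.pos s z') : z = z' := by
  have hz₁ : hp.pos (s + 1) z + 1 = hp.pos s z := by have := hp.pos_succ_cases hs z; omega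
  obtain ⟨w, hsw, hw⟩ := hp.exists_swapsAt_of_pos_succ_add_one_eq hs hz₁
  have hpos := hp.swapsAt_pos hs hsw (by omega)
  rcases hp.eq_or_eq_of_swapsAt_of_moved hs hsw (z := z') (by simp [Moved]; omega) with rfl | rfl
  · omega
  · rfl

theorem gateAt_of_pos_succ_add_one_eq {s : ℕ} (hs : s < steps n) {z : Fin n}
    (hz : hp.pos (s + 1) z + 1 = hp.pos s z) : hp.GateAt s (hp.pos (s + 1) z) := by
  obtain ⟨w, hsw, hw⟩ := hp.exists_swapsAt_of_pos_succ_add_one_eq hs hz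
  have hpos := hp.swapsAt_pos hs hsw (by omega)
  exact ⟨w, z, by omega, by omega, by omega, by omega⟩

theorem pos_eq_of_gateAt_of_swapsAt {s g : ℕ} (hs : s < steps n) (hg : hp.GateAt s g)
    {x y : Fin n} (hxy : hp.SwapsAt s x y) (h : hp.pos s x < hp.pos s y) :
    hp.pos s x = g ∧ hp.pos (s + 1) x = g + 1 := by
  obtain ⟨x₀, y₀, hx₀, hy₀, hx₀', hy₀'⟩ := hg
  have hpos := hp.swapsAt_pos hs hxy h
  rcases hp.eq_or_eq_of_swapsAt_of_moved hs hxy (z := x₀) (by simp [Moved]; omega)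
    with rfl | rfl <;> omega

theorem gateAt_unique {s g g' : ℕ} (hs : s < steps n) (hg : hp.GateAt s g)
    (hg' : hp.GateAt s g') : g = g' := by
  obtain ⟨x, y, hx, hy, hx', hy'⟩ := hg
  have hxy : hp.SwapsAt s x y :=
    ⟨fun he => by subst he; omega, by simp [Moved]; omega, by simp [Moved]; omega⟩
  have := hp.pos_eq_of_gateAt_of_swapsAt hs hg' hxy (by omega)
  omega

theorem pos_lt_pos_succ_of_not_swapsAt {s : ℕ} (hs : s < steps n) {x y : Fin n}
    (h : hp.pos s x < hp.pos s y) (hxy : ¬ hp.SwapsAt s x y) :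
    hp.pos (s + 1) x < hp.pos (s + 1) y := by
  have hne : x ≠ y := fun he => by subst he; omega
  have hinj := (hp.pos_injective (s := s + 1) hs).ne hne
  have hx := hp.pos_succ_cases hs x
  have hy := hp.pos_succ_cases hs y
  by_contra hlt
  exact hxy ⟨hne, by simp [Moved]; omega, by simp [Moved]; omega⟩

theorem pos_lt_pos_of_forall_not_swapsAt {s₀ s₁ : ℕ} (hs : s₀ ≤ s₁) (hs₁ : s₁ ≤ steps n)
    {x y : Fin n} (hxy : ∀ u, s₀ ≤ u → u < s₁ → ¬ hp.SwapsAt u x y)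
    (h : hp.pos s₀ x < hp.pos s₀ y) : hp.pos s₁ x < hp.pos s₁ y := by
  induction s₁, hs using Nat.le_induction with
  | base => exact h
  | succ s hs ih =>
    exact hp.pos_lt_pos_succ_of_not_swapsAt (by omega)
      (ih (by omega) fun u hu hus => hxy u hu (by omega)) (hxy s hs (by omega))

/-- The last arrangement reverses the first, so every pair changes its order at some step. -/
theorem exists_swapsAt {x y : Fin n} (hxy : x ≠ y) : ∃ s < steps n, hp.SwapsAt s x y := by
  have key : ∀ {x y : Fin n}, hp.pos 0 x < hp.pos 0 y → ∃ s < steps n, hp.SwapsAt s x y := by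
    intro x y h
    by_contra hno
    push Not at hno
    have hend := hp.pos_lt_pos_of_forall_not_swapsAt (Nat.zero_le _) le_rfl
      (fun u _ hu => hno u hu) h
    unfold steps at hend
    have := hp.pos_le (s := 0) (Nat.zero_le _) y
    rw [hp.reverse, hp.reverse] at hend
    omega
  rcases lt_or_gt_of_ne ((hp.pos_injective (s := 0) (Nat.zero_le _)).ne hxy) with h | h
  · exact key h
  · obtain ⟨s, hs, hsw⟩ := key h
    exact ⟨s, hs, hp.swapsAt_symm hsw⟩

/-- There are `n.choose 2` pairs and `n.choose 2` steps, each pair being swapped at some step, so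
no pair is swapped twice. -/
theorem eq_of_swapsAt_of_swapsAt {s s' : ℕ} (hs : s < steps n) (hs' : s' < steps n)
    {x y : Fin n} (h : hp.SwapsAt s x y) (h' : hp.SwapsAt s' x y) : s = s' := by
  classical
  let movers : ℕ → Finset (Fin n) := fun u => Finset.univ.filter (hp.Moved u)
  have hmovers : ∀ {u x y}, u < steps n → hp.SwapsAt u x y → movers u = {x, y} := by
    intro u x y hu hsw
    ext z
    simp only [movers, Finset.mem_filter, Finset.mem_univ, true_and, Finset.mem_insert,
      Finset.mem_singleton]
    refine ⟨hp.eq_or_eq_of_swapsAt_of_moved hu hsw, ?_⟩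
    rintro (rfl | rfl)
    exacts [hsw.2.1, hsw.2.2]
  refine Finset.inj_on_of_surj_on_of_card_le (s := Finset.range (steps n))
    (t := Finset.powersetCard 2 Finset.univ) (fun u _ => movers u) ?_ ?_ ?_
    (Finset.mem_range.2 hs) (Finset.mem_range.2 hs') (by simp only [hmovers hs h, hmovers hs' h'])
  · intro u hu
    obtain ⟨x, y, hsw, -⟩ := hp.exists_swapsAt_of_lt (Finset.mem_range.1 hu)
    rw [hmovers (Finset.mem_range.1 hu) hsw, Finset.mem_powersetCard]
    exact ⟨Finset.subset_univ _, Finset.card_pair hsw.1⟩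
  · intro P hP
    obtain ⟨x, y, hxy, rfl⟩ := Finset.card_eq_two.1 (Finset.mem_powersetCard.1 hP).2
    obtain ⟨u, hu, hsw⟩ := hp.exists_swapsAt hxy
    exact ⟨u, Finset.mem_range.2 hu, hmovers hu hsw⟩
  · simp [Finset.card_powersetCard, Nat.choose_two_right, steps]

theorem pos_lt_pos_iff_le {σ s : ℕ} (hσ : σ < steps n) {x y : Fin n} (hsw : hp.SwapsAt σ x y)
    (h₀ : hp.pos 0 x < hp.pos 0 y) (hs : s ≤ steps n) :
    hp.pos s x < hp.pos s y ↔ s ≤ σ := by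
  have before : ∀ s ≤ σ, hp.pos s x < hp.pos s y := fun s hsσ =>
    hp.pos_lt_pos_of_forall_not_swapsAt (Nat.zero_le s) (by omega)
      (fun u _ hu hu' => absurd (hp.eq_of_swapsAt_of_swapsAt (by omega) hσ hu' hsw) (by omega)) h₀
  refine ⟨fun h => ?_, before s⟩
  by_contra hσs
  have hpos := hp.swapsAt_pos hσ hsw (before σ le_rfl)
  have hafter := hp.pos_lt_pos_of_forall_not_swapsAt (x := y) (y := x) (s₀ := σ + 1)
    (by omega) hs (fun u hu _ hu' => absurd (hp.eq_of_swapsAt_of_swapsAt (by omega) hσ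
      (hp.swapsAt_symm hu') hsw) (by omega)) (by omega)
  omega

theorem pos_lt_pos_of_swapsAt_of_lt {σ s : ℕ} (hσ : σ < steps n) {x y : Fin n}
    (hsw : hp.SwapsAt σ x y) (h : hp.pos (σ + 1) x < hp.pos (σ + 1) y) (hσs : σ < s)
    (hs : s ≤ steps n) : hp.pos s x < hp.pos s y :=
  hp.pos_lt_pos_of_forall_not_swapsAt hσs hs
    (fun u hu _ hu' => absurd (hp.eq_of_swapsAt_of_swapsAt (by omega) hσ hu' hsw) (by omega)) h

theorem exists_swapsAt_of_moved {s : ℕ} (hs : s < steps n) {x : Fin n} (hx : hp.Moved s x) :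
    ∃ y, hp.SwapsAt s x y := by
  obtain ⟨x₀, y₀, hsw, -⟩ := hp.exists_swapsAt_of_lt hs
  rcases hp.eq_or_eq_of_swapsAt_of_moved hs hsw hx with rfl | rfl
  exacts [⟨y₀, hsw⟩, ⟨x₀, hp.swapsAt_symm hsw⟩]

theorem ncard_setOf_swapsAt_le_card (x : Fin n) {T : Finset ℕ} (hT : ∀ u ∈ T, u < steps n) :
    {z | ∃ u ∈ T, hp.SwapsAt u x z}.ncard ≤ T.card := by
  choose! σ hσ using fun z (hz : ∃ u ∈ T, hp.SwapsAt u x z) => hz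
  rw [← Set.ncard_coe_finset]
  refine Set.ncard_le_ncard_of_injOn σ (fun z hz => (hσ z hz).1) fun z hz z' hz' he => ?_
  have hsw := (hσ z hz).2
  rw [he] at hsw
  exact (hp.eq_or_eq_of_swapsAt_of_moved (hT _ (hσ z' hz').1) (hσ z' hz').2 hsw.2.2).resolve_left
    hsw.1.symm

/-- No pair is swapped twice, so distinct steps moving `x` have distinct partners. -/
theorem card_le_ncard_setOf_swapsAt (x : Fin n) {T : Finset ℕ}
    (hT : ∀ u ∈ T, u < steps n ∧ hp.Moved u x) :
    T.card ≤ {z | ∃ u ∈ T, hp.SwapsAt u x z}.ncard := by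
  have : Nonempty (Fin n) := ⟨x⟩
  choose! y hy using fun u hu => hp.exists_swapsAt_of_moved (hT u hu).1 (hT u hu).2
  rw [← Set.ncard_coe_finset]
  refine Set.ncard_le_ncard_of_injOn y (fun u hu => ⟨u, hu, hy u hu⟩) fun u hu u' hu' he => ?_
  have hsw := hy u hu
  rw [he] at hsw
  exact hp.eq_of_swapsAt_of_swapsAt (hT u hu).1 (hT u' hu').1 hsw (hy u' hu')

/-- Between two passes of `x` up through gate `g` it passes down through `g`. -/
theorem ncard_upPartners_le {s₀ s₁ : ℕ} (hs₁ : s₁ ≤ steps n) (x : Fin n) (g : ℕ) :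
    {z | ∃ u ∈ Set.Ico s₀ s₁, hp.SwapsAt u x z ∧ hp.pos u x = g ∧ hp.pos (u + 1) x = g + 1}.ncard ≤
      {y | ∃ u ∈ Set.Ico s₀ s₁, hp.SwapsAt u x y ∧
        hp.pos u x = g + 1 ∧ hp.pos (u + 1) x = g}.ncard + 1 := by
  set U := (Finset.Ico s₀ s₁).filter (fun u => hp.pos u x = g ∧ hp.pos (u + 1) x = g + 1)
  set D := (Finset.Ico s₀ s₁).filter (fun u => hp.pos u x = g + 1 ∧ hp.pos (u + 1) x = g)
  have hUD : U.card ≤ D.card + 1 := card_filter_upCrossing_le (fun u => hp.pos u x) g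
    fun u _ hu => by have := hp.pos_succ_cases (s := u) (by omega) x; omega
  have hU := hp.ncard_setOf_swapsAt_le_card x (T := U) fun u hu => by
    have := (Finset.mem_Ico.1 (Finset.mem_filter.1 hu).1).2; omega
  have hD := hp.card_le_ncard_setOf_swapsAt x (T := D) fun u hu => by
    obtain ⟨hu, h₁, h₂⟩ := Finset.mem_filter.1 hu
    exact ⟨by have := (Finset.mem_Ico.1 hu).2; omega, by simp [Moved]; omega⟩
  have hZ : {z | ∃ u ∈ Set.Ico s₀ s₁, hp.SwapsAt u x z ∧ hp.pos u x = g ∧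
      hp.pos (u + 1) x = g + 1} ⊆ {z | ∃ u ∈ U, hp.SwapsAt u x z} := by
    rintro z ⟨u, hu, hsw, h₁, h₂⟩
    exact ⟨u, by simp [U, hu.1, hu.2, h₁, h₂], hsw⟩
  have hY : {z | ∃ u ∈ D, hp.SwapsAt u x z} ⊆ {y | ∃ u ∈ Set.Ico s₀ s₁, hp.SwapsAt u x y ∧
      hp.pos u x = g + 1 ∧ hp.pos (u + 1) x = g} := by
    rintro z ⟨u, hu, hsw⟩
    obtain ⟨hu, h₁, h₂⟩ := Finset.mem_filter.1 hu
    exact ⟨u, Finset.mem_Ico.1 hu, hsw, h₁, h₂⟩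
  have := Set.ncard_le_ncard hZ
  have := Set.ncard_le_ncard hY
  omega

theorem ncard_le_of_pos_mem_Icc {s : ℕ} (hs : s ≤ steps n) {E : Set (Fin n)} {lo hi : ℕ}
    (hE : ∀ z ∈ E, hp.pos s z ∈ Set.Icc lo hi) : E.ncard ≤ hi + 1 - lo :=
  (Set.ncard_le_ncard_of_injOn _ hE (hp.pos_injective hs).injOn).trans_eq (Set.ncard_Icc_nat _ _)

def CrossesDown (g : ℕ) (z : Fin n) : Prop :=
  ∃ u < steps n, hp.pos u z = g + 1 ∧ hp.pos (u + 1) z = g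

theorem crossesDown_of_lt_of_le {s s' g : ℕ} (hss' : s ≤ s') (hs' : s' ≤ steps n) {z : Fin n}
    (h : g < hp.pos s z) (h' : hp.pos s' z ≤ g) : hp.CrossesDown g z := by
  by_contra hno
  have : ∀ u, s ≤ u → u ≤ s' → g < hp.pos u z := by
    intro u hu
    induction u, hu using Nat.le_induction with
    | base => exact fun _ => h
    | succ u hu ih =>
      intro hus
      have := hp.pos_succ_cases (s := u) (by omega) z
      have := ih (by omega)
      by_contra hle
      exact hno ⟨u, by omega, by omega, by omega⟩
  have := this s' hss' le_rfl
  omega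

theorem ncard_crossesDown_le (g : ℕ) :
    {z | hp.CrossesDown g z}.ncard ≤ {t | t < steps n ∧ hp.GateAt t g}.ncard := by
  choose! u hu using fun z (hz : hp.CrossesDown g z) => hz
  refine Set.ncard_le_ncard_of_injOn u (fun z hz => ⟨(hu z hz).1, ?_⟩) (fun z hz z' hz' he => ?_)
    ((Set.finite_Iio (steps n)).subset fun t ht => ht.1)
  · obtain ⟨hlt, h₁, h₂⟩ := hu z hz
    simpa [h₂] using hp.gateAt_of_pos_succ_add_one_eq hlt (z := z) (by omega)
  · obtain ⟨hlt, h₁, h₂⟩ := hu z hz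
    obtain ⟨-, h₁', h₂'⟩ := hu z' hz'
    rw [he] at hlt h₁ h₂
    exact hp.eq_of_pos_succ_lt hlt (by omega) (by omega)

theorem ncard_critical_eq_add {g : ℕ} (hg : g ≠ n - g) :
    {t | t < steps n ∧ hp.Critical t g}.ncard =
      {t | t < steps n ∧ hp.GateAt t g}.ncard + {t | t < steps n ∧ hp.GateAt t (n - g)}.ncard := by
  have hfin : ∀ i, {t | t < steps n ∧ hp.GateAt t i}.Finite :=
    fun i => (Set.finite_Iio (steps n)).subset fun t ht => ht.1
  rw [← Set.ncard_union_eq ?_ (hfin g) (hfin (n - g))]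
  · congr 1
    ext t
    simp only [Critical, Set.mem_ofPred_eq, Set.mem_union]
    tauto
  · exact Set.disjoint_left.2 fun t ht ht' => hg (hp.gateAt_unique ht.1 ht.2 ht'.2)

theorem NLe_zero : hp.NLe 0 = 0 := by
  simp [NLe, LeCritical]

theorem NLe_succ {k : ℕ} (hk : 2 * (k + 1) < n) :
    hp.NLe (k + 1) = hp.NLe k + {t | t < steps n ∧ hp.Critical t (k + 1)}.ncard := by
  have hfin : ∀ P : ℕ → Prop, {t | t < steps n ∧ P t}.Finite :=
    fun P => (Set.finite_Iio (steps n)).subset fun t ht => ht.1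
  rw [NLe, NLe, ← Set.ncard_union_eq ?_ (hfin _) (hfin _)]
  · congr 1
    ext t
    simp only [LeCritical, Set.mem_ofPred_eq, Set.mem_union]
    constructor
    · rintro ⟨ht, i, hi₁, hik, hcrit⟩
      rcases (show i ≤ k ∨ i = k + 1 by omega) with hi | rfl
      exacts [Or.inl ⟨ht, i, hi₁, hi, hcrit⟩, Or.inr ⟨ht, hcrit⟩]
    · rintro (⟨ht, i, hi₁, hik, hcrit⟩ | ⟨ht, hcrit⟩)
      exacts [⟨ht, i, hi₁, by omega, hcrit⟩, ⟨ht, k + 1, by omega, le_rfl, hcrit⟩]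
  · refine Set.disjoint_left.2 fun t ⟨ht, i, hi₁, hik, hcrit⟩ ⟨_, hcrit'⟩ => ?_
    have := fun g g' (h : hp.GateAt t g) (h' : hp.GateAt t g') => hp.gateAt_unique ht h h'
    rcases hcrit with h | h <;> rcases hcrit' with h' | h' <;> (have := this _ _ h h'; omega)

end HalfPeriod

theorem HalfPeriod.ncard_critical_eq_three_mul {hp : HalfPeriod 30}
    (hN1 : ∀ k : ℕ, 1 ≤ k → k ≤ 10 → hp.NLe k = 3 * Nat.choose (k + 1) 2) {g : ℕ} (hg₁ : 1 ≤ g)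
    (hg : g ≤ 10) : {t | t < HalfPeriod.steps 30 ∧ hp.Critical t g}.ncard = 3 * g := by
  obtain ⟨k, rfl⟩ : ∃ k, g = k + 1 := ⟨g - 1, by omega⟩
  have hsucc := hp.NLe_succ (k := k) (by omega)
  have hk : hp.NLe k = 3 * Nat.choose (k + 1) 2 := by
    rcases Nat.eq_zero_or_pos k with rfl | hk
    · simp [hp.NLe_zero]
    · exact hN1 k hk (by omega)
  have hpascal : (k + 1 + 1).choose 2 = (k + 1).choose 2 + (k + 1) := by
    rw [Nat.choose_succ_succ', Nat.choose_one_right, add_comm]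
  rw [hN1 (k + 1) hg₁ hg, hk, hpascal] at hsucc
  omega

theorem EntersCenterAt.pos_le_of_le {hp : HalfPeriod 30} {k : ℕ} {x : Fin 30} {t : ℕ}
    (ht : EntersCenterAt hp k x t) (hk : 2 * k < 30) (h₀ : hp.pos 0 x ≤ k) :
    (∀ s ≤ t, hp.pos s x ≤ k) ∧ hp.pos (t + 1) x = k + 1 := by
  obtain ⟨ht, hin, -, hfirst⟩ := ht
  have hle : ∀ s ≤ t, hp.pos s x ≤ k := by
    intro s hs
    induction s with
    | zero => exact h₀
    | succ s ih =>
      have := ih (by omega)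
      have := hp.pos_succ_cases (s := s) (by omega) x
      by_contra h
      exact hfirst s (by omega) ⟨⟨by omega, by omega⟩, fun hc => by have := hc.1; omega⟩
  have := hle t le_rfl
  have := hp.pos_succ_cases ht x
  exact ⟨hle, by have := hin.1; omega⟩

namespace IsThreeDecompLabeling30

open HalfPeriod

variable {hp : HalfPeriod 30} {a b c : Fin 10 → Fin 30}

theorem a_injective (h3 : IsThreeDecompLabeling30 hp a b c) : Function.Injective a :=
  fun m m' h => Sum.inl_injective (h3.1 (a₁ := .inl m) (a₂ := .inl m') h)

theorem b_injective (h3 : IsThreeDecompLabeling30 hp a b c) : Function.Injective b :=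
  fun m m' h => Sum.inl_injective (Sum.inr_injective (h3.1 (a₁ := .inr (.inl m))
    (a₂ := .inr (.inl m')) h))

theorem a_ne_b (h3 : IsThreeDecompLabeling30 hp a b c) (m m' : Fin 10) : a m ≠ b m' :=
  fun h => Sum.inl_ne_inr (h3.1 (a₁ := .inl m) (a₂ := .inr (.inl m')) h)

theorem b_ne_c (h3 : IsThreeDecompLabeling30 hp a b c) (m m' : Fin 10) : b m ≠ c m' :=
  fun h => Sum.inl_ne_inr (Sum.inr_injective (h3.1 (a₁ := .inr (.inl m)) (a₂ := .inr (.inr m')) h))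

theorem bijective (h3 : IsThreeDecompLabeling30 hp a b c) :
    Function.Bijective (Sum.elim a (Sum.elim b c)) :=
  (Fintype.bijective_iff_injective_and_card _).2 ⟨h3.1, by simp⟩

theorem ncard_setOf_eq_add (h3 : IsThreeDecompLabeling30 hp a b c) (Q : Fin 30 → Prop) :
    {z | Q z}.ncard = {m | Q (a m)}.ncard + {m | Q (b m)}.ncard + {m | Q (c m)}.ncard := by
  classical
  simp only [Set.ncard_eq_toFinset_card', Set.toFinset_ofPred, Finset.card_filter]
  rw [← h3.bijective.sum_comp, Fintype.sum_sum_type, Fintype.sum_sum_type, add_assoc]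
  rfl

theorem pos_zero_a_lt (h3 : IsThreeDecompLabeling30 hp a b c) {m m' : Fin 10} (h : m < m') :
    hp.pos 0 (a m') < hp.pos 0 (a m) := by
  rw [h3.2.1, h3.2.1]; omega

theorem pos_final_a (h3 : IsThreeDecompLabeling30 hp a b c) (m : Fin 10) :
    hp.pos 435 (a m) = 21 + m := by
  rw [show hp.pos 435 (a m) = 31 - hp.pos 0 (a m) from hp.reverse _, h3.2.1]; omega

theorem pos_final_b (h3 : IsThreeDecompLabeling30 hp a b c) (m : Fin 10) :
    hp.pos 435 (b m) = 20 - m := by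
  rw [show hp.pos 435 (b m) = 31 - hp.pos 0 (b m) from hp.reverse _, h3.2.2.1]; omega

theorem pos_final_c (h3 : IsThreeDecompLabeling30 hp a b c) (m : Fin 10) :
    hp.pos 435 (c m) = 10 - m := by
  rw [show hp.pos 435 (c m) = 31 - hp.pos 0 (c m) from hp.reverse _, h3.2.2.2.1]; omega

/-- Take the time just after the last `A`-`B` swap: no `B`-`C` swap has happened yet. -/
theorem exists_time_b_left (h3 : IsThreeDecompLabeling30 hp a b c) :
    ∃ τ ≤ 435, ∀ m m', hp.pos τ (b m) < hp.pos τ (a m') ∧ hp.pos τ (b m) < hp.pos τ (c m') := by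
  choose σ hσ using fun p : Fin 10 × Fin 10 => hp.exists_swapsAt (h3.a_ne_b p.1 p.2)
  obtain ⟨p₀, hp₀⟩ := Finite.exists_max σ
  have hσ₀ : σ p₀ < 435 := (hσ p₀).1
  refine ⟨σ p₀ + 1, hσ₀, fun m m' => ⟨?_, ?_⟩⟩
  · have h₀ : hp.pos 0 (a m') < hp.pos 0 (b m) := by rw [h3.2.1, h3.2.2.1]; omega
    obtain ⟨hσm, hsw⟩ : σ (m', m) < 435 ∧ hp.SwapsAt (σ (m', m)) (a m') (b m) := hσ (m', m)
    have hord := (hp.pos_lt_pos_iff_le hσm hsw h₀ (s := σ p₀ + 1) hσ₀).not.2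
      (by have := hp₀ (m', m); omega)
    have hne := (hp.pos_injective (s := σ p₀ + 1) hσ₀).ne (h3.a_ne_b m' m)
    omega
  · obtain ⟨v, hv, hsw⟩ := hp.exists_swapsAt (h3.b_ne_c m m')
    have hlt := h3.2.2.2.2.1 (σ p₀) v (hσ p₀).1 hv ⟨p₀.1, p₀.2, (hσ p₀).2⟩
      ⟨m', b m, .inr ⟨m, rfl⟩, hp.swapsAt_symm hsw⟩
    have h₀ : hp.pos 0 (b m) < hp.pos 0 (c m') := by rw [h3.2.2.1, h3.2.2.2.1]; omega
    exact (hp.pos_lt_pos_iff_le hv hsw h₀ hσ₀).2 hlt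

/-- At a time when every `b` is left of all twenty `a`'s and `c`'s, the `b`'s occupy positions
`1, …, 10`; those at positions `≤ g` got there by crossing gate `g` downward. -/
theorem le_ncard_b_crossesDown (h3 : IsThreeDecompLabeling30 hp a b c) {g : ℕ} (hg : g ≤ 10) :
    g ≤ {m | hp.CrossesDown g (b m)}.ncard := by
  obtain ⟨τ, hτ, hb⟩ := h3.exists_time_b_left
  have hb10 : ∀ m, hp.pos τ (b m) ≤ 10 := by
    intro m
    have hcount := h3.ncard_setOf_eq_add (fun z => hp.pos τ (b m) < hp.pos τ z)
    have hslots := hp.ncard_le_of_pos_mem_Icc hτ (E := {z | hp.pos τ (b m) < hp.pos τ z})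
      (lo := hp.pos τ (b m) + 1) (hi := 30) fun z hz => ⟨hz, hp.pos_le hτ z⟩
    have ha : {m' | hp.pos τ (b m) < hp.pos τ (a m')} = Set.univ :=
      Set.eq_univ_of_forall fun m' => (hb m m').1
    have hc : {m' | hp.pos τ (b m) < hp.pos τ (c m')} = Set.univ :=
      Set.eq_univ_of_forall fun m' => (hb m m').2
    rw [ha, hc, Set.ncard_univ, Nat.card_fin] at hcount
    omega
  set S := {m | hp.pos τ (b m) ≤ g}
  have hS : S ⊆ {m | hp.CrossesDown g (b m)} := fun m hm =>
    hp.crossesDown_of_lt_of_le (Nat.zero_le τ) hτ (by rw [h3.2.2.1]; omega) hm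
  have hSc : Sᶜ.ncard ≤ 10 - g := by
    rw [← Set.ncard_image_of_injective _ h3.b_injective]
    refine (hp.ncard_le_of_pos_mem_Icc hτ (lo := g + 1) (hi := 10) ?_).trans_eq (by omega)
    rintro _ ⟨m, hm, rfl⟩
    exact ⟨by simp only [S, Set.mem_compl_iff, Set.mem_ofPred_eq] at hm; omega, hb10 m⟩
  have := Set.ncard_add_ncard_compl S
  have := Set.ncard_le_ncard hS
  rw [Nat.card_fin] at *
  omega

theorem le_ncard_c_crossesDown (h3 : IsThreeDecompLabeling30 hp a b c) {g h : ℕ} (hg : g ≤ 10)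
    (hgh : g ≤ h) (hh : h ≤ 30 - g) : g ≤ {m | hp.CrossesDown h (c m)}.ncard := by
  set S := {m : Fin 10 | 10 - g ≤ (m : ℕ)}
  have hS : S ⊆ {m | hp.CrossesDown h (c m)} := fun m (hm : 10 - g ≤ (m : ℕ)) =>
    hp.crossesDown_of_lt_of_le (Nat.zero_le 435) le_rfl (by rw [h3.2.2.2.1]; omega)
      (by rw [h3.pos_final_c]; omega)
  have hSc : Sᶜ.ncard ≤ 10 - g := by
    refine (Set.ncard_le_ncard_of_injOn Fin.val (t := Set.Iio (10 - g)) (fun m hm => ?_)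
      Fin.val_injective.injOn).trans_eq (Set.ncard_Iio_nat _)
    simp only [S, Set.mem_compl_iff, Set.mem_ofPred_eq] at hm
    exact Set.mem_Iio.2 (by omega)
  have := Set.ncard_add_ncard_compl S
  have := Set.ncard_le_ncard hS
  rw [Nat.card_fin] at *
  omega

theorem not_crossesDown_a (h3 : IsThreeDecompLabeling30 hp a b c)
    (hN1 : ∀ k : ℕ, 1 ≤ k → k ≤ 10 → hp.NLe k = 3 * Nat.choose (k + 1) 2) {g : ℕ}
    (hg : 1 ≤ g ∧ g ≤ 10 ∨ 20 ≤ g ∧ g ≤ 29) (m : Fin 10) : ¬ hp.CrossesDown g (a m) := by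
  intro hm
  obtain ⟨g', hg'₁, hg', hgg'⟩ : ∃ g', 1 ≤ g' ∧ g' ≤ 10 ∧ (g = g' ∨ g = 30 - g') := by
    rcases hg with hg | hg
    exacts [⟨g, hg.1, hg.2, .inl rfl⟩, ⟨30 - g, by omega, by omega, .inr (by omega)⟩]
  have hcrit := hp.ncard_critical_eq_add (g := g') (by omega)
  rw [hp.ncard_critical_eq_three_mul hN1 hg'₁ hg'] at hcrit
  have hlow := hp.ncard_crossesDown_le g'
  have hhigh := hp.ncard_crossesDown_le (30 - g')
  rw [h3.ncard_setOf_eq_add] at hlow hhigh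
  have := h3.le_ncard_b_crossesDown hg'
  have := h3.le_ncard_c_crossesDown (h := g') hg' le_rfl (by omega)
  have := h3.le_ncard_c_crossesDown (h := 30 - g') hg' (by omega) le_rfl
  have ha : ∀ h, g = h → 1 ≤ {m | hp.CrossesDown h (a m)}.ncard := by
    rintro h rfl
    exact Nat.one_le_iff_ne_zero.2 ((Set.ncard_pos).2 ⟨m, hm⟩).ne'
  rcases hgg' with hgg' | hgg' <;> have := ha _ hgg' <;> omega

theorem lt_pos_a_of_lt (h3 : IsThreeDecompLabeling30 hp a b c)
    (hN1 : ∀ k : ℕ, 1 ≤ k → k ≤ 10 → hp.NLe k = 3 * Nat.choose (k + 1) 2) {g : ℕ}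
    (hg : 1 ≤ g ∧ g ≤ 10 ∨ 20 ≤ g ∧ g ≤ 29) {m : Fin 10} {s s' : ℕ} (hss' : s ≤ s')
    (hs' : s' ≤ 435) (h : g < hp.pos s (a m)) : g < hp.pos s' (a m) := by
  by_contra h'
  exact h3.not_crossesDown_a hN1 hg m (hp.crossesDown_of_lt_of_le hss' hs' h (by omega))

theorem ten_lt_pos_of_pos_lt_pos (h3 : IsThreeDecompLabeling30 hp a b c)
    (hN1 : ∀ k : ℕ, 1 ≤ k → k ≤ 10 → hp.NLe k = 3 * Nat.choose (k + 1) 2) {m m' : Fin 10}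
    (hmm' : m < m') {s : ℕ} (hs : s ≤ 435) (h : hp.pos s (a m) < hp.pos s (a m')) :
    10 < hp.pos s (a m) := by
  obtain ⟨σ, hσ, hsw⟩ := hp.exists_swapsAt (h3.a_injective.ne hmm'.ne')
  have h₀ := h3.pos_zero_a_lt hmm'
  have hσs : σ < s := by
    have := (hp.pos_lt_pos_iff_le hσ hsw h₀ hs).not.1 (by omega)
    omega
  have hpos := hp.swapsAt_pos hσ hsw ((hp.pos_lt_pos_iff_le hσ hsw h₀ hσ.le).2 le_rfl)
  have hgate : 10 < hp.pos σ (a m') := by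
    by_contra hle
    exact h3.not_crossesDown_a hN1 (.inl ⟨hp.one_le_pos hσ.le (a m'), by omega⟩) m
      ⟨σ, hσ, by omega, by omega⟩
  exact h3.lt_pos_a_of_lt hN1 (g := 10) (s := σ + 1) (.inl ⟨by norm_num, le_rfl⟩) hσs hs
    (by omega)

theorem pos_le_twenty_of_pos_lt_pos (h3 : IsThreeDecompLabeling30 hp a b c)
    (hN1 : ∀ k : ℕ, 1 ≤ k → k ≤ 10 → hp.NLe k = 3 * Nat.choose (k + 1) 2) {m m' : Fin 10}
    (hmm' : m < m') {s : ℕ} (hs : s ≤ 435) (h : hp.pos s (a m') < hp.pos s (a m)) :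
    hp.pos s (a m) ≤ 20 := by
  by_contra h20
  obtain ⟨σ, hσ, hsw⟩ := hp.exists_swapsAt (h3.a_injective.ne hmm'.ne')
  have h₀ := h3.pos_zero_a_lt hmm'
  have hsσ : s ≤ σ := (hp.pos_lt_pos_iff_le hσ hsw h₀ hs).1 h
  have hpos := hp.swapsAt_pos hσ hsw ((hp.pos_lt_pos_iff_le hσ hsw h₀ hσ.le).2 le_rfl)
  have h20σ := h3.lt_pos_a_of_lt hN1 (g := 20) (m := m) (.inr ⟨le_rfl, by norm_num⟩) hsσ hσ.le
    (by omega)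
  have := hp.pos_le hσ.le (a m)
  exact h3.not_crossesDown_a hN1 (g := hp.pos σ (a m')) (.inr ⟨by omega, by omega⟩) m
    ⟨σ, hσ, by omega, by omega⟩

theorem pos_eq_fifteen_of_swapsAt_of_gateAt (h3 : IsThreeDecompLabeling30 hp a b c)
    {i j : Fin 10} (hij : i < j) {σ : ℕ} (hσ : σ < 435) (hg : hp.GateAt σ 15)
    (hsw : hp.SwapsAt σ (a j) (a i)) : hp.pos σ (a j) = 15 ∧ hp.pos (σ + 1) (a j) = 15 + 1 :=
  hp.pos_eq_of_gateAt_of_swapsAt hσ hg hsw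
    ((hp.pos_lt_pos_iff_le hσ hsw (h3.pos_zero_a_lt hij) hσ.le).2 le_rfl)

/-- Whoever `a j` passes moving down stays right of it, and at the end only the `a`'s of larger
index are right of `a j`. -/
theorem exists_eq_a_of_swapsAt_of_pos_succ_lt (h3 : IsThreeDecompLabeling30 hp a b c)
    {j : Fin 10} {y : Fin 30} {u : ℕ} (hu : u < 435) (hsw : hp.SwapsAt u (a j) y)
    (hdown : hp.pos (u + 1) (a j) < hp.pos u (a j)) :
    ∃ m, y = a m ∧ j < m ∧ hp.pos u y + 1 = hp.pos u (a j) := by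
  have hne := (hp.pos_injective hu.le).ne hsw.1
  have hyx : hp.pos u y < hp.pos u (a j) := by
    by_contra h
    have := hp.swapsAt_pos hu hsw (by omega)
    omega
  have hpos := hp.swapsAt_pos hu (hp.swapsAt_symm hsw) hyx
  have hend := hp.pos_lt_pos_of_swapsAt_of_lt hu hsw (by omega) (s := 435) hu le_rfl
  obtain ⟨w, rfl⟩ := h3.bijective.2 y
  rw [h3.pos_final_a] at hend
  rcases w with m | m | m <;> simp only [Sum.elim_inl, Sum.elim_inr] at hend hpos ⊢
  · rw [h3.pos_final_a] at hend
    exact ⟨m, rfl, Fin.lt_def.2 (by omega), by omega⟩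
  · rw [h3.pos_final_b] at hend; omega
  · rw [h3.pos_final_c] at hend; omega

/-- The upward passes of `a j` through gate `15` inside `[s₀, s₁)` exceed its downward passes there
by at most one, and the partners of the latter are `a`'s of index `> j`, hence not in `a '' L`. -/
theorem halOf_le_of_subset_union (h3 : IsThreeDecompLabeling30 hp a b c) {j : Fin 10}
    {s₀ s₁ s : ℕ} (hs₁ : s₁ ≤ 435) (hs : s ≤ 435) {L : Set (Fin 10)} (hL : ∀ i ∈ L, i < j)
    (hF : {i | i < j ∧ ∃ u, u < steps 30 ∧ hp.GateAt u 15 ∧ hp.SwapsAt u (a j) (a i)} ⊆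
      L ∪ a ⁻¹' {z | ∃ u ∈ Set.Ico s₀ s₁, hp.SwapsAt u (a j) z ∧
        hp.pos u (a j) = 15 ∧ hp.pos (u + 1) (a j) = 15 + 1})
    {lo hi : ℕ} (hpos : ∀ z ∈ a '' L ∪ {y | ∃ u ∈ Set.Ico s₀ s₁, hp.SwapsAt u (a j) y ∧
      hp.pos u (a j) = 15 + 1 ∧ hp.pos (u + 1) (a j) = 15}, hp.pos s z ∈ Set.Icc lo hi) :
    halOf hp a j ≤ hi + 1 - lo + 1 := by
  have hdisj : Disjoint (a '' L) {y | ∃ u ∈ Set.Ico s₀ s₁, hp.SwapsAt u (a j) y ∧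
      hp.pos u (a j) = 15 + 1 ∧ hp.pos (u + 1) (a j) = 15} := by
    refine Set.disjoint_left.2 fun _ ⟨i, hi, hiy⟩ ⟨u, hu, hsw, h16, h15⟩ => ?_
    obtain ⟨m, rfl, hjm, -⟩ :=
      h3.exists_eq_a_of_swapsAt_of_pos_succ_lt (by have := hu.2; omega) hsw (by omega)
    exact h3.a_injective.ne ((hL i hi).trans hjm).ne hiy
  exact (Set.ncard_le_ncard_image_union_add_one h3.a_injective hF
    (hp.ncard_upPartners_le hs₁ (a j) 15) hdisj).trans
    (Nat.add_le_add_right (hp.ncard_le_of_pos_mem_Icc hs hpos) 1)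

theorem halOf_le_of_pos_eq_ten_add (h3 : IsThreeDecompLabeling30 hp a b c)
    (hN1 : ∀ k : ℕ, 1 ≤ k → k ≤ 10 → hp.NLe k = 3 * Nat.choose (k + 1) 2) {t : ℕ}
    (ht : EntersCenterAt hp 13 (a 9) t) {j : Fin 10} {l : ℕ} (hl₁ : 1 ≤ l) (hl : l ≤ 3)
    (hX : hp.pos (t + 1) (a j) = 10 + l) : halOf hp a j ≤ l := by
  have ht' : t < 435 := ht.1
  have h9 := (ht.pos_le_of_le (by norm_num) (by rw [h3.2.1]; simp)).2
  have hslot : ∀ m, hp.pos (t + 1) (a m) < hp.pos (t + 1) (a j) →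
      hp.pos (t + 1) (a m) ∈ Set.Icc 11 (9 + l) := by
    intro m hm
    have hm9 : m < 9 := by
      by_contra h
      obtain rfl : m = 9 := by omega
      omega
    exact ⟨h3.ten_lt_pos_of_pos_lt_pos hN1 hm9 (by omega) (by omega), by omega⟩
  refine (h3.halOf_le_of_subset_union (s₀ := t + 1) le_rfl (s := t + 1) ht'
    (L := {i | i < j ∧ hp.pos (t + 1) (a i) < hp.pos (t + 1) (a j)}) (fun i hi => hi.1)
    (lo := 11) (hi := 9 + l) ?_ ?_).trans (by omega)
  · rintro i ⟨hij, σ, hσ, hg, hsw⟩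
    by_cases hL : hp.pos (t + 1) (a i) < hp.pos (t + 1) (a j)
    · exact .inl ⟨hij, hL⟩
    have hne := (hp.pos_injective (s := t + 1) ht').ne (h3.a_injective.ne hij.ne')
    refine .inr ⟨σ, ⟨?_, hσ⟩, hsw, h3.pos_eq_fifteen_of_swapsAt_of_gateAt hij hσ hg hsw⟩
    exact (hp.pos_lt_pos_iff_le hσ hsw (h3.pos_zero_a_lt hij) (s := t + 1) ht').1 (by omega)
  · rintro _ (⟨i, hi, rfl⟩ | ⟨u, hu, hsw, h16, h15⟩)
    · exact hslot i hi.2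
    obtain ⟨m, rfl, hjm, -⟩ := h3.exists_eq_a_of_swapsAt_of_pos_succ_lt hu.2 hsw (by omega)
    exact hslot m ((hp.pos_lt_pos_iff_le hu.2 (hp.swapsAt_symm hsw) (h3.pos_zero_a_lt hjm)
      (s := t + 1) ht').2 hu.1)

theorem halOf_le_of_pos_eq_twentyOne_sub (h3 : IsThreeDecompLabeling30 hp a b c)
    (hN1 : ∀ k : ℕ, 1 ≤ k → k ≤ 10 → hp.NLe k = 3 * Nat.choose (k + 1) 2) {t : ℕ}
    (ht : EntersCenterAt hp 13 (a 9) t) {j : Fin 10} (hj : j < 9) {l : ℕ} (hl₁ : 1 ≤ l)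
    (hl : l ≤ 3) (hX : hp.pos (t + 1) (a j) = 21 - l) : halOf hp a j ≤ l := by
  have ht' : t < 435 := ht.1
  obtain ⟨h9le, h9⟩ := ht.pos_le_of_le (by norm_num) (by rw [h3.2.1]; simp)
  have hslot : ∀ m, m < 9 → hp.pos (t + 1) (a j) < hp.pos (t + 1) (a m) →
      hp.pos (t + 1) (a m) ∈ Set.Icc (22 - l) 20 :=
    fun m hm9 hm => ⟨by omega, h3.pos_le_twenty_of_pos_lt_pos hN1 hm9 ht' (by omega)⟩
  refine (h3.halOf_le_of_subset_union (s₀ := 0) (s₁ := t + 1) ht' (s := t + 1) ht'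
    (L := {i | i < j ∧ hp.pos (t + 1) (a j) < hp.pos (t + 1) (a i)}) (fun i hi => hi.1)
    (lo := 22 - l) (hi := 20) ?_ ?_).trans (by omega)
  · rintro i ⟨hij, σ, hσ, hg, hsw⟩
    by_cases hR : hp.pos (t + 1) (a j) < hp.pos (t + 1) (a i)
    · exact .inl ⟨hij, hR⟩
    refine .inr ⟨σ, ⟨Nat.zero_le σ, ?_⟩, hsw, h3.pos_eq_fifteen_of_swapsAt_of_gateAt hij hσ hg hsw⟩
    have := (hp.pos_lt_pos_iff_le hσ hsw (h3.pos_zero_a_lt hij) (s := t + 1) ht').not.1 hR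
    omega
  · rintro _ (⟨i, hi, rfl⟩ | ⟨u, hu, hsw, h16, h15⟩)
    · exact hslot i (hi.1.trans hj) hi.2
    have hu' := hu.2
    obtain ⟨m, rfl, hjm, hadj⟩ :=
      h3.exists_eq_a_of_swapsAt_of_pos_succ_lt (by omega) hsw (by omega)
    -- `a 9` is still at a position `≤ 13` at time `u ≤ t`, so it is not the partner at `15`
    have hm9 : m < 9 := by
      by_contra h
      obtain rfl : m = 9 := by omega
      have := h9le u (by omega)
      omega
    have hne := (hp.pos_injective (s := t + 1) ht').ne (h3.a_injective.ne hjm.ne)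
    have := (hp.pos_lt_pos_iff_le (show u < 435 by omega) (hp.swapsAt_symm hsw)
      (h3.pos_zero_a_lt hjm) (s := t + 1) ht').not.2 (by omega)
    exact hslot m hm9 (by omega)

end IsThreeDecompLabeling30

/-- Let `π_{a_10}` be the arrangement of `Π` immediately after the swap
in which `a_10` enters the 13-center. If for some `1 ≤ i ≤ 5` and `1 ≤ l ≤ 3` the element
`a_i` is at position `10 + l` or at position `21 - l` in `π_{a_10}`, then `hal(a_i) ≤ l`. -/
theorem hal_bound_near_boundary (hp : HalfPeriod 30) (a b c : Fin 10 → Fin 30)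
    (h3 : IsThreeDecompLabeling30 hp a b c)
    (hN1 : ∀ k : ℕ, 1 ≤ k → k ≤ 10 → hp.NLe k = 3 * Nat.choose (k + 1) 2)
    (t : ℕ) (ht : EntersCenterAt hp 13 (a 9) t)
    (i l : ℕ) (hi5 : i ≤ 5) (hl1 : 1 ≤ l) (hl3 : l ≤ 3)
    (hpos : hp.pos (t + 1) (a ⟨i - 1, by omega⟩) = 10 + l ∨
      hp.pos (t + 1) (a ⟨i - 1, by omega⟩) = 21 - l) :
    halOf hp a ⟨i - 1, by omega⟩ ≤ l := by
  rcases hpos with h | h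
  · exact h3.halOf_le_of_pos_eq_ten_add hN1 ht hl1 hl3 h
  · exact h3.halOf_le_of_pos_eq_twentyOne_sub hN1 ht (Fin.lt_def.2 (by simp; omega)) hl1 hl3 h
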